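/- There exists a constant C > 0 such that for every integer k ≥ 2, every j ∈ {0,1,2,3,4} and every x ∈ [0,L], the j-th derivatives with respect to x of the generating functions satisfy |g_k^{(j)}(x)| ≤ C^k/(4k−5)! and |h_k^{(j)}(x)| ≤ C^k/(4k−5)!. -/

import Mathlib

open Set Filter intervalIntegral

/-- The generating functions `g_k` of the beam model, defined by iterated integrals. -/
noncomputable def genG (ρ EI : ℝ → ℝ) (m : ℝ) : ℕ → ℝ → ℝ
  | 0 => fun _ => 1
  | 1 => fun x =>
      -(∫ s₁ in (0:ℝ)..x, ∫ s₂ in (0:ℝ)..s₁, ∫ s₃ in (0:ℝ)..s₂, ∫ s₄ in (0:ℝ)..s₃,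
          ρ s₄ / EI s₂)
      - m * ∫ s₁ in (0:ℝ)..x, ∫ s₂ in (0:ℝ)..s₁, ∫ _s₃ in (0:ℝ)..s₂, 1 / EI s₂
  | (k + 2) => fun x =>
      -(∫ s₁ in (0:ℝ)..x, ∫ s₂ in (0:ℝ)..s₁, ∫ s₃ in (0:ℝ)..s₂, ∫ s₄ in (0:ℝ)..s₃,
          ρ s₄ * genG ρ EI m (k + 1) s₄ / EI s₂)

/-- The generating functions `h_k` of the beam model, defined by iterated integrals. -/
noncomputable def genH (ρ EI : ℝ → ℝ) (J : ℝ) : ℕ → ℝ → ℝ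
  | 0 => fun x => x
  | 1 => fun x =>
      -(∫ s₁ in (0:ℝ)..x, ∫ s₂ in (0:ℝ)..s₁, ∫ s₃ in (0:ℝ)..s₂, ∫ s₄ in (0:ℝ)..s₃,
          s₄ * ρ s₄ / EI s₂)
      + J * ∫ s₁ in (0:ℝ)..x, ∫ s₂ in (0:ℝ)..s₁, 1 / EI s₂
  | (k + 2) => fun x =>
      -(∫ s₁ in (0:ℝ)..x, ∫ s₂ in (0:ℝ)..s₁, ∫ s₃ in (0:ℝ)..s₂, ∫ s₄ in (0:ℝ)..s₃,
          ρ s₄ * genH ρ EI J (k + 1) s₄ / EI s₂)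

/-- Membership in the Gevrey class `G_s[0,T]`: a smooth function whose derivatives satisfy
`sup_{t ∈ [0,T]} |y⁽ᵐ⁾(t)| ≤ D^(m+1) (m!)^s` for some `D > 0`. -/
def MemGevrey (s T : ℝ) (y : ℝ → ℝ) : Prop :=
  ContDiff ℝ (⊤ : ℕ∞) y ∧ ∃ D > 0, ∀ (n : ℕ), ∀ t ∈ Set.Icc (0:ℝ) T,
    |iteratedDeriv n y t| ≤ D ^ (n + 1) * (n.factorial : ℝ) ^ s


open MeasureTheory Topology

section Helpers

lemma ftc_within {L : ℝ} (hL : 0 < L) {f : ℝ → ℝ} (hf : ContinuousOn f (Icc 0 L))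
    {x : ℝ} (hx : x ∈ Icc (0:ℝ) L) :
    HasDerivWithinAt (fun y => ∫ t in (0:ℝ)..y, f t) (f x) (Icc 0 L) x := by
  have hsub : uIcc (0:ℝ) x ⊆ Icc 0 L := by
    rw [uIcc_of_le hx.1]; exact Icc_subset_Icc le_rfl hx.2
  have hInt : IntervalIntegrable f volume 0 x := (hf.mono hsub).intervalIntegrable
  rcases eq_or_lt_of_le hx.1 with h0 | h0
  · -- x = 0
    subst h0
    have hmem : Icc (0:ℝ) L ∈ 𝓝[Ioi (0:ℝ)] (0:ℝ) := by
      apply mem_nhdsWithin.2 ⟨Iio L, isOpen_Iio, hL, ?_⟩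
      rintro y ⟨hy1, hy2⟩; exact ⟨le_of_lt hy2, le_of_lt hy1⟩
    have hmeas : StronglyMeasurableAtFilter f (𝓝[Ioi (0:ℝ)] 0) volume :=
      ⟨Icc 0 L, hmem, hf.aestronglyMeasurable measurableSet_Icc⟩
    have hb : ContinuousWithinAt f (Ioi (0:ℝ)) 0 :=
      ContinuousWithinAt.mono_of_mem_nhdsWithin (hf 0 (by exact ⟨le_rfl, hL.le⟩)) hmem
    exact (integral_hasDerivWithinAt_right hInt hmeas hb).mono Icc_subset_Ici_self
  rcases eq_or_lt_of_le hx.2 with hLx | hLx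
  · -- x = L
    have hmem : Icc (0:ℝ) L ∈ 𝓝[Iic x] x := by
      apply mem_nhdsWithin.2 ⟨Ioi (0:ℝ), isOpen_Ioi, h0, ?_⟩
      rintro y ⟨hy1, hy2⟩; exact ⟨le_of_lt hy1, hLx ▸ hy2⟩
    have hmeas : StronglyMeasurableAtFilter f (𝓝[Iic x] x) volume :=
      ⟨Icc 0 L, hmem, hf.aestronglyMeasurable measurableSet_Icc⟩
    have hb : ContinuousWithinAt f (Iic x) x := ContinuousWithinAt.mono_of_mem_nhdsWithin (hf x hx) hmem
    exact (integral_hasDerivWithinAt_right (s := Iic x) (t := Iic x) hInt hmeas hb).mono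
      (fun y hy => hLx ▸ hy.2)
  · -- interior
    have hmem : Icc (0:ℝ) L ∈ 𝓝 x := Icc_mem_nhds h0 hLx
    have hmeas : StronglyMeasurableAtFilter f (𝓝 x) volume :=
      ⟨Icc 0 L, hmem, hf.aestronglyMeasurable measurableSet_Icc⟩
    have hb : ContinuousAt f x := hf.continuousAt hmem
    exact (integral_hasDerivAt_right hInt hmeas hb).hasDerivWithinAt

lemma cont_integral {L : ℝ} (hL : 0 < L) {f : ℝ → ℝ} (hf : ContinuousOn f (Icc 0 L)) :
    ContinuousOn (fun y => ∫ t in (0:ℝ)..y, f t) (Icc 0 L) :=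
  fun x hx => ((ftc_within hL hf hx).differentiableWithinAt).continuousWithinAt

lemma integral_pow_bound {L c : ℝ} {f : ℝ → ℝ} (hf : ContinuousOn f (Icc 0 L))
    (n : ℕ) (hc : 0 ≤ c) (hb : ∀ t ∈ Icc 0 L, |f t| ≤ c * t ^ n / n.factorial)
    {x : ℝ} (hx : x ∈ Icc (0:ℝ) L) :
    |∫ t in (0:ℝ)..x, f t| ≤ c * x ^ (n+1) / (n+1).factorial := by
  have h0x : 0 ≤ x := hx.1
  have hsub : Icc (0:ℝ) x ⊆ Icc 0 L := Icc_subset_Icc le_rfl hx.2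
  have hint : IntervalIntegrable f volume 0 x := by
    apply ContinuousOn.intervalIntegrable
    rw [uIcc_of_le h0x]; exact hf.mono hsub
  have h1 : |∫ t in (0:ℝ)..x, f t| ≤ ∫ t in (0:ℝ)..x, |f t| :=
    intervalIntegral.abs_integral_le_integral_abs h0x
  have h2 : (∫ t in (0:ℝ)..x, |f t|) ≤ ∫ t in (0:ℝ)..x, c * t ^ n / n.factorial := by
    apply intervalIntegral.integral_mono_on h0x hint.abs
    · apply ContinuousOn.intervalIntegrable
      rw [uIcc_of_le h0x]
      fun_prop
    · intro t ht; exact hb t (hsub ht)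
  have h3 : (∫ t in (0:ℝ)..x, c * t ^ n / n.factorial) = c * x ^ (n+1) / (n+1).factorial := by
    have : (∫ t in (0:ℝ)..x, c * t ^ n / n.factorial)
        = (∫ t in (0:ℝ)..x, t ^ n) * (c / n.factorial) := by
      rw [← intervalIntegral.integral_mul_const]
      congr 1; funext t; ring
    rw [this, integral_pow]
    have hfac : ((n+1).factorial : ℝ) = (n+1) * n.factorial := by
      rw [Nat.factorial_succ]; push_cast; ring
    rw [hfac]
    have h4 : (n.factorial : ℝ) ≠ 0 := Nat.cast_ne_zero.2 n.factorial_ne_zero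
    have h5 : ((n : ℝ) + 1) ≠ 0 := by positivity
    field_simp
    ring
  calc |∫ t in (0:ℝ)..x, f t| ≤ _ := h1
    _ ≤ _ := h2
    _ = _ := h3

lemma integral_le_of_le {L c : ℝ} (hL : 0 ≤ L) {f : ℝ → ℝ} (hf : ContinuousOn f (Icc 0 L))
    (hc : 0 ≤ c) (hb : ∀ t ∈ Icc 0 L, |f t| ≤ c)
    {x : ℝ} (hx : x ∈ Icc (0:ℝ) L) :
    |∫ t in (0:ℝ)..x, f t| ≤ c * L := by
  have h := integral_pow_bound hf 0 hc (by simpa using hb) hx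
  norm_num at h
  calc |∫ t in (0:ℝ)..x, f t| ≤ c * x := h
    _ ≤ c * L := by apply mul_le_mul_of_nonneg_left hx.2 hc

lemma iter_step {F G G' : ℝ → ℝ} {s : Set ℝ} (hs : UniqueDiffOn ℝ s) {n : ℕ}
    (h1 : Set.EqOn (iteratedDerivWithin n F s) G s)
    (h2 : ∀ x ∈ s, HasDerivWithinAt G (G' x) s x) :
    Set.EqOn (iteratedDerivWithin (n+1) F s) G' s := by
  intro x hx
  rw [iteratedDerivWithin_succ, derivWithin_congr h1 (h1 hx)]
  exact (h2 x hx).derivWithin (hs x hx)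

noncomputable def Ff (ρ EI g : ℝ → ℝ) : ℝ → ℝ := fun x =>
  -(∫ s₁ in (0:ℝ)..x, ∫ s₂ in (0:ℝ)..s₁, ∫ s₃ in (0:ℝ)..s₂, ∫ s₄ in (0:ℝ)..s₃,
      ρ s₄ * g s₄ / EI s₂)

/-- The master constant for derivative bounds. -/
noncomputable def Dconst (L cE Bρ BE B1 B2 : ℝ) : ℝ :=
  Bρ * L * L * cE⁻¹ * L * L + Bρ * L * L * cE⁻¹ * L + Bρ * L * L * cE⁻¹ +
  (Bρ * L * cE⁻¹ + Bρ * L * L * (B1 * cE⁻¹ ^ 2)) +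
  (Bρ * cE⁻¹ + Bρ * L * (B1 * cE⁻¹ ^ 2) +
    (Bρ * L * (B1 * cE⁻¹ ^ 2) + Bρ * L * L * ((B2 * BE ^ 2 + 2 * B1 ^ 2 * BE) * (cE⁻¹ ^ 2) ^ 2)))

lemma key {L cE Bρ BE B1 B2 Asup : ℝ} (hL : 0 < L) {ρ EI g : ℝ → ℝ}
    (hEI : ContDiffOn ℝ 4 EI (Icc 0 L)) (hcE : 0 < cE)
    (hEIlb : ∀ x ∈ Icc (0:ℝ) L, cE ≤ EI x)
    (hρ : ContinuousOn ρ (Icc 0 L)) (hg : ContinuousOn g (Icc 0 L))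
    (hBρ : ∀ x ∈ Icc (0:ℝ) L, |ρ x| ≤ Bρ)
    (hBE : ∀ x ∈ Icc (0:ℝ) L, |EI x| ≤ BE)
    (hB1 : ∀ x ∈ Icc (0:ℝ) L, |derivWithin EI (Icc 0 L) x| ≤ B1)
    (hB2 : ∀ x ∈ Icc (0:ℝ) L, |derivWithin (derivWithin EI (Icc 0 L)) (Icc 0 L) x| ≤ B2)
    (hAsup : 0 ≤ Asup) (hgb0 : ∀ t ∈ Icc (0:ℝ) L, |g t| ≤ Asup)
    {n : ℕ} {A : ℝ} (hA : 0 ≤ A)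
    (hgb : ∀ t ∈ Icc (0:ℝ) L, |g t| ≤ A * t ^ n / n.factorial) :
    ContinuousOn (Ff ρ EI g) (Icc 0 L) ∧
    (∀ x ∈ Icc (0:ℝ) L,
      |Ff ρ EI g x| ≤ (Bρ * cE⁻¹ * A) * x ^ (n+4) / (n+4).factorial) ∧
    (∀ j ≤ 4, ∀ x ∈ Icc (0:ℝ) L,
      |iteratedDerivWithin j (Ff ρ EI g) (Icc 0 L) x| ≤ Dconst L cE Bρ BE B1 B2 * Asup) := by
  have hL0 : (0:ℝ) ≤ L := hL.le
  have hs : UniqueDiffOn ℝ (Icc (0:ℝ) L) := uniqueDiffOn_Icc hL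
  have h0mem : (0:ℝ) ∈ Icc (0:ℝ) L := ⟨le_rfl, hL0⟩
  have hBρ0 : 0 ≤ Bρ := le_trans (abs_nonneg _) (hBρ 0 h0mem)
  have hBE0 : 0 ≤ BE := le_trans (abs_nonneg _) (hBE 0 h0mem)
  have hB10 : 0 ≤ B1 := le_trans (abs_nonneg _) (hB1 0 h0mem)
  have hB20 : 0 ≤ B2 := le_trans (abs_nonneg _) (hB2 0 h0mem)
  have hcE' : (0:ℝ) < cE⁻¹ := by positivity
  have hEIpos : ∀ x ∈ Icc (0:ℝ) L, 0 < EI x := fun x hx => lt_of_lt_of_le hcE (hEIlb x hx)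
  have hEIne : ∀ x ∈ Icc (0:ℝ) L, EI x ≠ 0 := fun x hx => (hEIpos x hx).ne'
  have hEIinv : ∀ x ∈ Icc (0:ℝ) L, |(EI x)⁻¹| ≤ cE⁻¹ := by
    intro x hx
    rw [abs_inv, abs_of_pos (hEIpos x hx)]
    exact inv_anti₀ hcE (hEIlb x hx)
  -- the building blocks
  set w : ℝ → ℝ := fun t => ρ t * g t with hw_def
  set P1 : ℝ → ℝ := fun x => ∫ t in (0:ℝ)..x, w t with hP1_def
  set P : ℝ → ℝ := fun x => ∫ t in (0:ℝ)..x, P1 t with hP_def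
  set QI : ℝ → ℝ := fun x => P x * (EI x)⁻¹ with hQI_def
  set Q : ℝ → ℝ := fun x => ∫ t in (0:ℝ)..x, QI t with hQ_def
  have hwc : ContinuousOn w (Icc 0 L) := hρ.mul hg
  have hP1c : ContinuousOn P1 (Icc 0 L) := fun x hx =>
    ((ftc_within hL hwc hx).differentiableWithinAt).continuousWithinAt
  have hPc : ContinuousOn P (Icc 0 L) := fun x hx =>
    ((ftc_within hL hP1c hx).differentiableWithinAt).continuousWithinAt
  have hEIc : ContinuousOn EI (Icc 0 L) := hEI.continuousOn
  have hQIc : ContinuousOn QI (Icc 0 L) := hPc.mul (hEIc.inv₀ hEIne)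
  have hQc : ContinuousOn Q (Icc 0 L) := fun x hx =>
    ((ftc_within hL hQIc hx).differentiableWithinAt).continuousWithinAt
  -- rewriting F
  have hFeq : Ff ρ EI g = fun x => -(∫ t in (0:ℝ)..x, Q t) := by
    funext x
    simp only [Ff, hQ_def, hQI_def, hP_def, hP1_def, hw_def, div_eq_mul_inv,
      intervalIntegral.integral_mul_const]
  -- decay bounds (part 2)
  have hBA : 0 ≤ Bρ * A := mul_nonneg hBρ0 hA
  have db_w : ∀ t ∈ Icc (0:ℝ) L, |w t| ≤ (Bρ * A) * t ^ n / n.factorial := by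
    intro t ht
    have h1 : |w t| ≤ Bρ * (A * t ^ n / n.factorial) := by
      rw [hw_def]
      simp only
      rw [abs_mul]
      apply mul_le_mul (hBρ t ht) (hgb t ht) (abs_nonneg _) hBρ0
    calc |w t| ≤ Bρ * (A * t ^ n / n.factorial) := h1
      _ = (Bρ * A) * t ^ n / n.factorial := by ring
  have db_P1 : ∀ x ∈ Icc (0:ℝ) L, |P1 x| ≤ (Bρ * A) * x ^ (n+1) / (n+1).factorial :=
    fun x hx => integral_pow_bound hwc n hBA db_w hx
  have db_P : ∀ x ∈ Icc (0:ℝ) L, |P x| ≤ (Bρ * A) * x ^ (n+2) / (n+2).factorial :=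
    fun x hx => integral_pow_bound hP1c (n+1) hBA db_P1 hx
  have hBcA : 0 ≤ Bρ * cE⁻¹ * A := by positivity
  have db_QI : ∀ t ∈ Icc (0:ℝ) L, |QI t| ≤ (Bρ * cE⁻¹ * A) * t ^ (n+2) / (n+2).factorial := by
    intro t ht
    have h2 : 0 ≤ (Bρ * A) * t ^ (n+2) / (n+2).factorial := by
      have := ht.1; positivity
    calc |QI t| = |P t| * |(EI t)⁻¹| := by rw [hQI_def]; exact abs_mul _ _
      _ ≤ ((Bρ * A) * t ^ (n+2) / (n+2).factorial) * cE⁻¹ :=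
          mul_le_mul (db_P t ht) (hEIinv t ht) (abs_nonneg _) h2
      _ = (Bρ * cE⁻¹ * A) * t ^ (n+2) / (n+2).factorial := by ring
  have db_Q : ∀ x ∈ Icc (0:ℝ) L, |Q x| ≤ (Bρ * cE⁻¹ * A) * x ^ (n+3) / (n+3).factorial :=
    fun x hx => integral_pow_bound hQIc (n+2) hBcA db_QI hx
  have db_F : ∀ x ∈ Icc (0:ℝ) L,
      |Ff ρ EI g x| ≤ (Bρ * cE⁻¹ * A) * x ^ (n+4) / (n+4).factorial := by
    intro x hx
    rw [hFeq]
    simp only [abs_neg]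
    exact integral_pow_bound hQc (n+3) hBcA db_Q hx
  -- continuity of F
  have hFc : ContinuousOn (Ff ρ EI g) (Icc 0 L) := by
    rw [hFeq]
    have hQint : ContinuousOn (fun y => ∫ t in (0:ℝ)..y, Q t) (Icc 0 L) := fun x hx =>
      ((ftc_within hL hQc hx).differentiableWithinAt).continuousWithinAt
    exact hQint.neg
  refine ⟨hFc, db_F, ?_⟩
  -- derivative chain
  set e1 : ℝ → ℝ := derivWithin EI (Icc 0 L) with he1_def
  set e2 : ℝ → ℝ := derivWithin e1 (Icc 0 L) with he2_def
  have hEId : ∀ x ∈ Icc (0:ℝ) L, HasDerivWithinAt EI (e1 x) (Icc 0 L) x := fun x hx =>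
    ((hEI.differentiableOn (by norm_num)) x hx).hasDerivWithinAt
  have hE1cd : ContDiffOn ℝ 3 e1 (Icc 0 L) := hEI.derivWithin hs (by norm_num)
  have hE1d : ∀ x ∈ Icc (0:ℝ) L, HasDerivWithinAt e1 (e2 x) (Icc 0 L) x := fun x hx =>
    ((hE1cd.differentiableOn (by norm_num)) x hx).hasDerivWithinAt
  set u : ℝ → ℝ := fun x => -e1 x / EI x ^ 2 with hu_def
  set u' : ℝ → ℝ := fun x =>
    (-e2 x * EI x ^ 2 - -e1 x * (2 * EI x ^ 1 * e1 x)) / (EI x ^ 2) ^ 2 with hu'_def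
  set F1 : ℝ → ℝ := fun x => -Q x with hF1_def
  set F2 : ℝ → ℝ := fun x => -(P x * (EI x)⁻¹) with hF2_def
  set F3 : ℝ → ℝ := fun x => -(P1 x * (EI x)⁻¹ + P x * u x) with hF3_def
  set F4 : ℝ → ℝ := fun x =>
    -((w x * (EI x)⁻¹ + P1 x * u x) + (P1 x * u x + P x * u' x)) with hF4_def
  have hud : ∀ x ∈ Icc (0:ℝ) L, HasDerivWithinAt u (u' x) (Icc 0 L) x := fun x hx =>
    (hE1d x hx).neg.div ((hEId x hx).pow 2) (pow_ne_zero 2 (hEIne x hx))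
  have hd0 : ∀ x ∈ Icc (0:ℝ) L, HasDerivWithinAt (Ff ρ EI g) (F1 x) (Icc 0 L) x := by
    intro x hx
    rw [hFeq]
    exact (ftc_within hL hQc hx).neg
  have hd1 : ∀ x ∈ Icc (0:ℝ) L, HasDerivWithinAt F1 (F2 x) (Icc 0 L) x := fun x hx =>
    (ftc_within hL hQIc hx).neg
  have hd2 : ∀ x ∈ Icc (0:ℝ) L, HasDerivWithinAt F2 (F3 x) (Icc 0 L) x := fun x hx =>
    (((ftc_within hL hP1c hx).mul ((hEId x hx).inv (hEIne x hx))).neg)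
  have hd3 : ∀ x ∈ Icc (0:ℝ) L, HasDerivWithinAt F3 (F4 x) (Icc 0 L) x := fun x hx =>
    ((((ftc_within hL hwc hx).mul ((hEId x hx).inv (hEIne x hx))).add
      ((ftc_within hL hP1c hx).mul (hud x hx))).neg)
  -- iterated derivative identification
  have hE0 : Set.EqOn (iteratedDerivWithin 0 (Ff ρ EI g) (Icc 0 L)) (Ff ρ EI g) (Icc 0 L) := by
    intro x hx; simp [iteratedDerivWithin_zero]
  have hE1 : Set.EqOn (iteratedDerivWithin 1 (Ff ρ EI g) (Icc 0 L)) F1 (Icc 0 L) :=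
    iter_step hs hE0 hd0
  have hE2 : Set.EqOn (iteratedDerivWithin 2 (Ff ρ EI g) (Icc 0 L)) F2 (Icc 0 L) :=
    iter_step hs hE1 hd1
  have hE3 : Set.EqOn (iteratedDerivWithin 3 (Ff ρ EI g) (Icc 0 L)) F3 (Icc 0 L) :=
    iter_step hs hE2 hd2
  have hE4 : Set.EqOn (iteratedDerivWithin 4 (Ff ρ EI g) (Icc 0 L)) F4 (Icc 0 L) :=
    iter_step hs hE3 hd3
  -- sup bounds on the blocks
  have bW : ∀ t ∈ Icc (0:ℝ) L, |w t| ≤ Bρ * Asup := by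
    intro t ht
    rw [hw_def]; simp only; rw [abs_mul]
    exact mul_le_mul (hBρ t ht) (hgb0 t ht) (abs_nonneg _) hBρ0
  have hBAs : 0 ≤ Bρ * Asup := mul_nonneg hBρ0 hAsup
  have bP1 : ∀ x ∈ Icc (0:ℝ) L, |P1 x| ≤ Bρ * Asup * L := fun x hx =>
    integral_le_of_le hL0 hwc hBAs bW hx
  have bP : ∀ x ∈ Icc (0:ℝ) L, |P x| ≤ Bρ * Asup * L * L := fun x hx =>
    integral_le_of_le hL0 hP1c (by positivity) bP1 hx
  have bQI : ∀ x ∈ Icc (0:ℝ) L, |QI x| ≤ Bρ * Asup * L * L * cE⁻¹ := by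
    intro x hx
    rw [hQI_def]; simp only; rw [abs_mul]
    exact mul_le_mul (bP x hx) (hEIinv x hx) (abs_nonneg _) (by positivity)
  have bQ : ∀ x ∈ Icc (0:ℝ) L, |Q x| ≤ Bρ * Asup * L * L * cE⁻¹ * L := fun x hx =>
    integral_le_of_le hL0 hQIc (by positivity) bQI hx
  have bF0 : ∀ x ∈ Icc (0:ℝ) L, |Ff ρ EI g x| ≤ Bρ * Asup * L * L * cE⁻¹ * L * L := by
    intro x hx
    rw [hFeq]; simp only [abs_neg]
    exact integral_le_of_le hL0 hQc (by positivity) bQ hx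
  have hEIinv2 : ∀ x ∈ Icc (0:ℝ) L, |(EI x ^ 2)⁻¹| ≤ cE⁻¹ ^ 2 := by
    intro x hx
    calc |(EI x ^ 2)⁻¹| = |(EI x)⁻¹| ^ 2 := by rw [← inv_pow, abs_pow]
      _ ≤ cE⁻¹ ^ 2 := pow_le_pow_left₀ (abs_nonneg _) (hEIinv x hx) 2
  have bu : ∀ x ∈ Icc (0:ℝ) L, |u x| ≤ B1 * cE⁻¹ ^ 2 := by
    intro x hx
    rw [hu_def]; simp only
    rw [div_eq_mul_inv, abs_mul, abs_neg]
    exact mul_le_mul (hB1 x hx) (hEIinv2 x hx) (abs_nonneg _) hB10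
  have bu' : ∀ x ∈ Icc (0:ℝ) L,
      |u' x| ≤ (B2 * BE ^ 2 + 2 * B1 ^ 2 * BE) * (cE⁻¹ ^ 2) ^ 2 := by
    intro x hx
    rw [hu'_def]; simp only
    rw [div_eq_mul_inv, abs_mul]
    have hnum : |(-e2 x * EI x ^ 2 - -e1 x * (2 * EI x ^ 1 * e1 x))|
        ≤ B2 * BE ^ 2 + 2 * B1 ^ 2 * BE := by
      calc |(-e2 x * EI x ^ 2 - -e1 x * (2 * EI x ^ 1 * e1 x))|
          ≤ |(-e2 x * EI x ^ 2)| + |(-e1 x * (2 * EI x ^ 1 * e1 x))| := abs_sub _ _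
        _ ≤ B2 * BE ^ 2 + 2 * B1 ^ 2 * BE := by
            apply add_le_add
            · rw [abs_mul, abs_neg, abs_pow]
              exact mul_le_mul (hB2 x hx) (pow_le_pow_left₀ (abs_nonneg _) (hBE x hx) 2)
                (by positivity) hB20
            · rw [abs_mul, abs_neg]
              have h2 : |2 * EI x ^ 1 * e1 x| ≤ 2 * BE * B1 := by
                rw [abs_mul, abs_mul, pow_one, abs_two]
                exact mul_le_mul (mul_le_mul le_rfl (hBE x hx) (abs_nonneg _) (by norm_num))
                  (hB1 x hx) (abs_nonneg _) (by positivity)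
              calc |e1 x| * |2 * EI x ^ 1 * e1 x| ≤ B1 * (2 * BE * B1) :=
                    mul_le_mul (hB1 x hx) h2 (abs_nonneg _) hB10
                _ = 2 * B1 ^ 2 * BE := by ring
    have hden : |((EI x ^ 2) ^ 2)⁻¹| ≤ (cE⁻¹ ^ 2) ^ 2 := by
      calc |((EI x ^ 2) ^ 2)⁻¹| = |(EI x ^ 2)⁻¹| ^ 2 := by rw [← inv_pow, abs_pow]
        _ ≤ (cE⁻¹ ^ 2) ^ 2 := pow_le_pow_left₀ (abs_nonneg _) (hEIinv2 x hx) 2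
    exact mul_le_mul hnum hden (abs_nonneg _) (by positivity)
  have bF3 : ∀ x ∈ Icc (0:ℝ) L,
      |F3 x| ≤ Bρ * Asup * L * cE⁻¹ + Bρ * Asup * L * L * (B1 * cE⁻¹ ^ 2) := by
    intro x hx
    rw [hF3_def]; simp only [abs_neg]
    calc |P1 x * (EI x)⁻¹ + P x * u x| ≤ |P1 x| * |(EI x)⁻¹| + |P x| * |u x| := by
          rw [← abs_mul, ← abs_mul]; exact abs_add_le _ _
      _ ≤ (Bρ * Asup * L) * cE⁻¹ + (Bρ * Asup * L * L) * (B1 * cE⁻¹ ^ 2) := by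
          apply add_le_add
          · exact mul_le_mul (bP1 x hx) (hEIinv x hx) (abs_nonneg _) (by positivity)
          · exact mul_le_mul (bP x hx) (bu x hx) (abs_nonneg _) (by positivity)
  have bF4 : ∀ x ∈ Icc (0:ℝ) L,
      |F4 x| ≤ Bρ * cE⁻¹ * Asup + Bρ * Asup * L * (B1 * cE⁻¹ ^ 2) +
        (Bρ * Asup * L * (B1 * cE⁻¹ ^ 2) +
          Bρ * Asup * L * L * ((B2 * BE ^ 2 + 2 * B1 ^ 2 * BE) * (cE⁻¹ ^ 2) ^ 2)) := by
    intro x hx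
    rw [hF4_def]; simp only [abs_neg]
    have t1 : |w x * (EI x)⁻¹| ≤ Bρ * cE⁻¹ * Asup := by
      rw [abs_mul]
      calc |w x| * |(EI x)⁻¹| ≤ (Bρ * Asup) * cE⁻¹ :=
            mul_le_mul (bW x hx) (hEIinv x hx) (abs_nonneg _) hBAs
        _ = Bρ * cE⁻¹ * Asup := by ring
    have t2 : |P1 x * u x| ≤ Bρ * Asup * L * (B1 * cE⁻¹ ^ 2) := by
      rw [abs_mul]
      exact mul_le_mul (bP1 x hx) (bu x hx) (abs_nonneg _) (by positivity)
    have t3 : |P x * u' x| ≤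
        Bρ * Asup * L * L * ((B2 * BE ^ 2 + 2 * B1 ^ 2 * BE) * (cE⁻¹ ^ 2) ^ 2) := by
      rw [abs_mul]
      exact mul_le_mul (bP x hx) (bu' x hx) (abs_nonneg _) (by positivity)
    calc |(w x * (EI x)⁻¹ + P1 x * u x) + (P1 x * u x + P x * u' x)|
        ≤ |w x * (EI x)⁻¹ + P1 x * u x| + |P1 x * u x + P x * u' x| := abs_add_le _ _
      _ ≤ (|w x * (EI x)⁻¹| + |P1 x * u x|) + (|P1 x * u x| + |P x * u' x|) :=
          add_le_add (abs_add_le _ _) (abs_add_le _ _)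
      _ ≤ _ := by
          apply add_le_add (add_le_add t1 t2) (add_le_add t2 t3)
  -- assemble
  have hU1 : 0 ≤ B1 * cE⁻¹ ^ 2 := mul_nonneg hB10 (by positivity)
  have hU2 : 0 ≤ (B2 * BE ^ 2 + 2 * B1 ^ 2 * BE) * (cE⁻¹ ^ 2) ^ 2 :=
    mul_nonneg (add_nonneg (mul_nonneg hB20 (by positivity))
      (mul_nonneg (by positivity) hBE0)) (by positivity)
  have hBL : 0 ≤ Bρ * L := mul_nonneg hBρ0 hL0
  have hBLL : 0 ≤ Bρ * L * L := mul_nonneg hBL hL0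
  have hc4 : 0 ≤ Bρ * L * L * cE⁻¹ := mul_nonneg hBLL hcE'.le
  have hc5 : 0 ≤ Bρ * L * L * cE⁻¹ * L := mul_nonneg hc4 hL0
  have hc6 : 0 ≤ Bρ * L * L * cE⁻¹ * L * L := mul_nonneg hc5 hL0
  have hc7 : 0 ≤ Bρ * L * cE⁻¹ + Bρ * L * L * (B1 * cE⁻¹ ^ 2) :=
    add_nonneg (mul_nonneg hBL hcE'.le) (mul_nonneg hBLL hU1)
  have hc8 : 0 ≤ Bρ * cE⁻¹ + Bρ * L * (B1 * cE⁻¹ ^ 2) +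
      (Bρ * L * (B1 * cE⁻¹ ^ 2) + Bρ * L * L * ((B2 * BE ^ 2 + 2 * B1 ^ 2 * BE) * (cE⁻¹ ^ 2) ^ 2)) :=
    add_nonneg (add_nonneg (mul_nonneg hBρ0 hcE'.le) (mul_nonneg hBL hU1))
      (add_nonneg (mul_nonneg hBL hU1) (mul_nonneg hBLL hU2))
  intro j hj x hx
  interval_cases j
  · rw [hE0 hx]
    calc |Ff ρ EI g x| ≤ Bρ * Asup * L * L * cE⁻¹ * L * L := bF0 x hx
      _ = (Bρ * L * L * cE⁻¹ * L * L) * Asup := by ring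
      _ ≤ Dconst L cE Bρ BE B1 B2 * Asup :=
          mul_le_mul_of_nonneg_right (by simp only [Dconst]; linarith) hAsup
  · rw [hE1 hx]
    calc |F1 x| = |Q x| := by rw [hF1_def]; exact abs_neg _
      _ ≤ Bρ * Asup * L * L * cE⁻¹ * L := bQ x hx
      _ = (Bρ * L * L * cE⁻¹ * L) * Asup := by ring
      _ ≤ Dconst L cE Bρ BE B1 B2 * Asup :=
          mul_le_mul_of_nonneg_right (by simp only [Dconst]; linarith) hAsup
  · rw [hE2 hx]
    calc |F2 x| = |QI x| := by rw [hF2_def, hQI_def]; exact abs_neg _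
      _ ≤ Bρ * Asup * L * L * cE⁻¹ := bQI x hx
      _ = (Bρ * L * L * cE⁻¹) * Asup := by ring
      _ ≤ Dconst L cE Bρ BE B1 B2 * Asup :=
          mul_le_mul_of_nonneg_right (by simp only [Dconst]; linarith) hAsup
  · rw [hE3 hx]
    calc |F3 x| ≤ Bρ * Asup * L * cE⁻¹ + Bρ * Asup * L * L * (B1 * cE⁻¹ ^ 2) := bF3 x hx
      _ = (Bρ * L * cE⁻¹ + Bρ * L * L * (B1 * cE⁻¹ ^ 2)) * Asup := by ring
      _ ≤ Dconst L cE Bρ BE B1 B2 * Asup :=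
          mul_le_mul_of_nonneg_right (by simp only [Dconst]; linarith) hAsup
  · rw [hE4 hx]
    calc |F4 x| ≤ Bρ * cE⁻¹ * Asup + Bρ * Asup * L * (B1 * cE⁻¹ ^ 2) +
          (Bρ * Asup * L * (B1 * cE⁻¹ ^ 2) +
            Bρ * Asup * L * L * ((B2 * BE ^ 2 + 2 * B1 ^ 2 * BE) * (cE⁻¹ ^ 2) ^ 2)) := bF4 x hx
      _ = (Bρ * cE⁻¹ + Bρ * L * (B1 * cE⁻¹ ^ 2) +
            (Bρ * L * (B1 * cE⁻¹ ^ 2) +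
              Bρ * L * L * ((B2 * BE ^ 2 + 2 * B1 ^ 2 * BE) * (cE⁻¹ ^ 2) ^ 2))) * Asup := by ring
      _ ≤ Dconst L cE Bρ BE B1 B2 * Asup :=
          mul_le_mul_of_nonneg_right (by simp only [Dconst]; linarith) hAsup

lemma cont_int {L : ℝ} (hL : 0 < L) {f : ℝ → ℝ} (hf : ContinuousOn f (Icc 0 L)) :
    ContinuousOn (fun y => ∫ t in (0:ℝ)..y, f t) (Icc 0 L) := fun x hx =>
  ((ftc_within hL hf hx).differentiableWithinAt).continuousWithinAt

lemma base_g {L cE Bρ : ℝ} (hL : 0 < L) (m : ℝ) {ρ EI : ℝ → ℝ}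
    (hρ : ContinuousOn ρ (Icc 0 L)) (hEIc : ContinuousOn EI (Icc 0 L)) (hcE : 0 < cE)
    (hEIlb : ∀ x ∈ Icc (0:ℝ) L, cE ≤ EI x) (hBρ : ∀ x ∈ Icc (0:ℝ) L, |ρ x| ≤ Bρ) :
    ContinuousOn (genG ρ EI m 1) (Icc 0 L) ∧
    ∀ x ∈ Icc (0:ℝ) L,
      |genG ρ EI m 1 x| ≤ Bρ * L * L * cE⁻¹ * L * L + |m| * (L * cE⁻¹ * L * L) := by
  have hL0 : (0:ℝ) ≤ L := hL.le
  have h0mem : (0:ℝ) ∈ Icc (0:ℝ) L := ⟨le_rfl, hL0⟩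
  have hBρ0 : 0 ≤ Bρ := le_trans (abs_nonneg _) (hBρ 0 h0mem)
  have hcE' : (0:ℝ) < cE⁻¹ := by positivity
  have hEIpos : ∀ x ∈ Icc (0:ℝ) L, 0 < EI x := fun x hx => lt_of_lt_of_le hcE (hEIlb x hx)
  have hEIne : ∀ x ∈ Icc (0:ℝ) L, EI x ≠ 0 := fun x hx => (hEIpos x hx).ne'
  have hEIinv : ∀ x ∈ Icc (0:ℝ) L, |(EI x)⁻¹| ≤ cE⁻¹ := by
    intro x hx
    rw [abs_inv, abs_of_pos (hEIpos x hx)]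
    exact inv_anti₀ hcE (hEIlb x hx)
  set R1 : ℝ → ℝ := fun s => ∫ t in (0:ℝ)..s, ρ t with hR1
  set R2 : ℝ → ℝ := fun s => ∫ t in (0:ℝ)..s, R1 t with hR2
  set T2 : ℝ → ℝ := fun s => R2 s * (EI s)⁻¹ with hT2
  set T3 : ℝ → ℝ := fun s => ∫ t in (0:ℝ)..s, T2 t with hT3
  set T4 : ℝ → ℝ := fun s => ∫ t in (0:ℝ)..s, T3 t with hT4
  set U1 : ℝ → ℝ := fun s => s * (EI s)⁻¹ with hU1
  set U2 : ℝ → ℝ := fun s => ∫ t in (0:ℝ)..s, U1 t with hU2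
  set U3 : ℝ → ℝ := fun s => ∫ t in (0:ℝ)..s, U2 t with hU3
  have heq : genG ρ EI m 1 = fun x => -T4 x - m * U3 x := by
    funext x
    simp only [genG, hT4, hT3, hT2, hR2, hR1, hU3, hU2, hU1, div_eq_mul_inv, one_mul,
      intervalIntegral.integral_mul_const, intervalIntegral.integral_const, smul_eq_mul,
      sub_zero, one_div]
  have hR1c : ContinuousOn R1 (Icc 0 L) := cont_int hL hρ
  have hR2c : ContinuousOn R2 (Icc 0 L) := cont_int hL hR1c
  have hT2c : ContinuousOn T2 (Icc 0 L) := hR2c.mul (hEIc.inv₀ hEIne)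
  have hT3c : ContinuousOn T3 (Icc 0 L) := cont_int hL hT2c
  have hT4c : ContinuousOn T4 (Icc 0 L) := cont_int hL hT3c
  have hU1c : ContinuousOn U1 (Icc 0 L) := (continuous_id.continuousOn).mul (hEIc.inv₀ hEIne)
  have hU2c : ContinuousOn U2 (Icc 0 L) := cont_int hL hU1c
  have hU3c : ContinuousOn U3 (Icc 0 L) := cont_int hL hU2c
  constructor
  · rw [heq]
    exact (hT4c.neg).sub ((continuousOn_const).mul hU3c)
  · intro x hx
    have bR1 : ∀ t ∈ Icc (0:ℝ) L, |R1 t| ≤ Bρ * L := fun t ht =>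
      integral_le_of_le hL0 hρ hBρ0 hBρ ht
    have bR2 : ∀ t ∈ Icc (0:ℝ) L, |R2 t| ≤ Bρ * L * L := fun t ht =>
      integral_le_of_le hL0 hR1c (by positivity) bR1 ht
    have bT2 : ∀ t ∈ Icc (0:ℝ) L, |T2 t| ≤ Bρ * L * L * cE⁻¹ := by
      intro t ht
      rw [hT2]; simp only; rw [abs_mul]
      exact mul_le_mul (bR2 t ht) (hEIinv t ht) (abs_nonneg _) (by positivity)
    have bT3 : ∀ t ∈ Icc (0:ℝ) L, |T3 t| ≤ Bρ * L * L * cE⁻¹ * L := fun t ht =>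
      integral_le_of_le hL0 hT2c (by positivity) bT2 ht
    have bT4 : |T4 x| ≤ Bρ * L * L * cE⁻¹ * L * L :=
      integral_le_of_le hL0 hT3c (by positivity) bT3 hx
    have bU1 : ∀ t ∈ Icc (0:ℝ) L, |U1 t| ≤ L * cE⁻¹ := by
      intro t ht
      rw [hU1]; simp only; rw [abs_mul]
      exact mul_le_mul (by rw [abs_of_nonneg ht.1]; exact ht.2) (hEIinv t ht)
        (abs_nonneg _) hL0
    have bU2 : ∀ t ∈ Icc (0:ℝ) L, |U2 t| ≤ L * cE⁻¹ * L := fun t ht =>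
      integral_le_of_le hL0 hU1c (by positivity) bU1 ht
    have bU3 : |U3 x| ≤ L * cE⁻¹ * L * L :=
      integral_le_of_le hL0 hU2c (by positivity) bU2 hx
    rw [heq]
    calc |-T4 x - m * U3 x| ≤ |-T4 x| + |m * U3 x| := abs_sub _ _
      _ = |T4 x| + |m| * |U3 x| := by rw [abs_neg, abs_mul]
      _ ≤ Bρ * L * L * cE⁻¹ * L * L + |m| * (L * cE⁻¹ * L * L) :=
          add_le_add bT4 (mul_le_mul_of_nonneg_left bU3 (abs_nonneg _))

lemma base_h {L cE Bρ : ℝ} (hL : 0 < L) (J : ℝ) {ρ EI : ℝ → ℝ}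
    (hρ : ContinuousOn ρ (Icc 0 L)) (hEIc : ContinuousOn EI (Icc 0 L)) (hcE : 0 < cE)
    (hEIlb : ∀ x ∈ Icc (0:ℝ) L, cE ≤ EI x) (hBρ : ∀ x ∈ Icc (0:ℝ) L, |ρ x| ≤ Bρ) :
    ContinuousOn (genH ρ EI J 1) (Icc 0 L) ∧
    ∀ x ∈ Icc (0:ℝ) L,
      |genH ρ EI J 1 x| ≤ L * Bρ * L * L * cE⁻¹ * L * L + |J| * (cE⁻¹ * L * L) := by
  have hL0 : (0:ℝ) ≤ L := hL.le
  have h0mem : (0:ℝ) ∈ Icc (0:ℝ) L := ⟨le_rfl, hL0⟩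
  have hBρ0 : 0 ≤ Bρ := le_trans (abs_nonneg _) (hBρ 0 h0mem)
  have hcE' : (0:ℝ) < cE⁻¹ := by positivity
  have hEIpos : ∀ x ∈ Icc (0:ℝ) L, 0 < EI x := fun x hx => lt_of_lt_of_le hcE (hEIlb x hx)
  have hEIne : ∀ x ∈ Icc (0:ℝ) L, EI x ≠ 0 := fun x hx => (hEIpos x hx).ne'
  have hEIinv : ∀ x ∈ Icc (0:ℝ) L, |(EI x)⁻¹| ≤ cE⁻¹ := by
    intro x hx
    rw [abs_inv, abs_of_pos (hEIpos x hx)]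
    exact inv_anti₀ hcE (hEIlb x hx)
  have hσ : ContinuousOn (fun t => t * ρ t) (Icc 0 L) := (continuous_id.continuousOn).mul hρ
  have hσb : ∀ t ∈ Icc (0:ℝ) L, |t * ρ t| ≤ L * Bρ := by
    intro t ht
    rw [abs_mul]
    exact mul_le_mul (by rw [abs_of_nonneg ht.1]; exact ht.2) (hBρ t ht) (abs_nonneg _) hL0
  set R1 : ℝ → ℝ := fun s => ∫ t in (0:ℝ)..s, t * ρ t with hR1
  set R2 : ℝ → ℝ := fun s => ∫ t in (0:ℝ)..s, R1 t with hR2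
  set T2 : ℝ → ℝ := fun s => R2 s * (EI s)⁻¹ with hT2
  set T3 : ℝ → ℝ := fun s => ∫ t in (0:ℝ)..s, T2 t with hT3
  set T4 : ℝ → ℝ := fun s => ∫ t in (0:ℝ)..s, T3 t with hT4
  set V1 : ℝ → ℝ := fun s => (EI s)⁻¹ with hV1
  set V2 : ℝ → ℝ := fun s => ∫ t in (0:ℝ)..s, V1 t with hV2
  set V3 : ℝ → ℝ := fun s => ∫ t in (0:ℝ)..s, V2 t with hV3
  have heq : genH ρ EI J 1 = fun x => -T4 x + J * V3 x := by
    funext x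
    simp only [genH, hT4, hT3, hT2, hR2, hR1, hV3, hV2, hV1, div_eq_mul_inv, one_mul,
      intervalIntegral.integral_mul_const, one_div]
  have hR1c : ContinuousOn R1 (Icc 0 L) := cont_int hL hσ
  have hR2c : ContinuousOn R2 (Icc 0 L) := cont_int hL hR1c
  have hT2c : ContinuousOn T2 (Icc 0 L) := hR2c.mul (hEIc.inv₀ hEIne)
  have hT3c : ContinuousOn T3 (Icc 0 L) := cont_int hL hT2c
  have hT4c : ContinuousOn T4 (Icc 0 L) := cont_int hL hT3c
  have hV1c : ContinuousOn V1 (Icc 0 L) := hEIc.inv₀ hEIne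
  have hV2c : ContinuousOn V2 (Icc 0 L) := cont_int hL hV1c
  have hV3c : ContinuousOn V3 (Icc 0 L) := cont_int hL hV2c
  constructor
  · rw [heq]
    exact (hT4c.neg).add ((continuousOn_const).mul hV3c)
  · intro x hx
    have bR1 : ∀ t ∈ Icc (0:ℝ) L, |R1 t| ≤ L * Bρ * L := fun t ht =>
      integral_le_of_le hL0 hσ (by positivity) hσb ht
    have bR2 : ∀ t ∈ Icc (0:ℝ) L, |R2 t| ≤ L * Bρ * L * L := fun t ht =>
      integral_le_of_le hL0 hR1c (by positivity) bR1 ht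
    have bT2 : ∀ t ∈ Icc (0:ℝ) L, |T2 t| ≤ L * Bρ * L * L * cE⁻¹ := by
      intro t ht
      rw [hT2]; simp only; rw [abs_mul]
      exact mul_le_mul (bR2 t ht) (hEIinv t ht) (abs_nonneg _) (by positivity)
    have bT3 : ∀ t ∈ Icc (0:ℝ) L, |T3 t| ≤ L * Bρ * L * L * cE⁻¹ * L := fun t ht =>
      integral_le_of_le hL0 hT2c (by positivity) bT2 ht
    have bT4 : |T4 x| ≤ L * Bρ * L * L * cE⁻¹ * L * L :=
      integral_le_of_le hL0 hT3c (by positivity) bT3 hx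
    have bV1 : ∀ t ∈ Icc (0:ℝ) L, |V1 t| ≤ cE⁻¹ := fun t ht => hEIinv t ht
    have bV2 : ∀ t ∈ Icc (0:ℝ) L, |V2 t| ≤ cE⁻¹ * L := fun t ht =>
      integral_le_of_le hL0 hV1c (by positivity) bV1 ht
    have bV3 : |V3 x| ≤ cE⁻¹ * L * L :=
      integral_le_of_le hL0 hV2c (by positivity) bV2 hx
    rw [heq]
    calc |-T4 x + J * V3 x| ≤ |-T4 x| + |J * V3 x| := abs_add_le _ _
      _ = |T4 x| + |J| * |V3 x| := by rw [abs_neg, abs_mul]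
      _ ≤ L * Bρ * L * L * cE⁻¹ * L * L + |J| * (cE⁻¹ * L * L) :=
          add_le_add bT4 (mul_le_mul_of_nonneg_left bV3 (abs_nonneg _))

lemma arith {Dp M Lm : ℝ} (hDp : 1 ≤ Dp) (hM : 1 ≤ M) (hLm : 1 ≤ Lm) (k' : ℕ) :
    Dp * (M ^ (k'+1) * Lm ^ (4*k') / ((4*k').factorial : ℝ)) ≤
      (64 * Dp * M * Lm ^ 4) ^ (k'+2) / (((4*(k'+2)-5).factorial : ℝ)) := by
  have hDp0 : (0:ℝ) ≤ Dp := by linarith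
  have hM0 : (0:ℝ) ≤ M := by linarith
  have hLm0 : (0:ℝ) ≤ Lm := by linarith
  have h1 : 4*(k'+2)-5 = 4*k'+3 := by omega
  rw [h1]
  have hf0 : (0:ℝ) < ((4*k').factorial : ℝ) := Nat.cast_pos.2 (Nat.factorial_pos _)
  have hf3 : (0:ℝ) < ((4*k'+3).factorial : ℝ) := Nat.cast_pos.2 (Nat.factorial_pos _)
  have hLHS : Dp * (M ^ (k'+1) * Lm ^ (4*k') / ((4*k').factorial : ℝ))
      = Dp * M ^ (k'+1) * Lm ^ (4*k') / ((4*k').factorial : ℝ) := by ring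
  rw [hLHS, div_le_div_iff₀ hf0 hf3]
  have hfacsplit : (((4*k'+3).factorial : ℕ) : ℝ)
      = ((4*k'+3 : ℕ) : ℝ) * ((4*k'+2 : ℕ) : ℝ) * ((4*k'+1 : ℕ) : ℝ) * ((4*k').factorial : ℝ) := by
    rw [show 4*k'+3 = (4*k'+2)+1 from rfl, Nat.factorial_succ,
      show 4*k'+2 = (4*k'+1)+1 from rfl, Nat.factorial_succ,
      show 4*k'+1 = (4*k')+1 from rfl, Nat.factorial_succ]
    push_cast; ring
  rw [hfacsplit]
  have hnatN : ∀ K : ℕ, 4*K+3 ≤ 4^(K+2) := by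
    intro K
    have h1 : 2*K+2 < 2^(2*K+2) := Nat.lt_two_pow_self
    calc 4*K+3 ≤ 2*(2*K+2) := by omega
      _ ≤ 2*2^(2*K+2) := by omega
      _ = 2^(2*K+3) := by rw [pow_succ]; ring
      _ ≤ 2^(2*(K+2)) := Nat.pow_le_pow_right (by norm_num) (by omega)
      _ = 4^(K+2) := by rw [pow_mul]; norm_num
  have hb3 : ((4*k'+3 : ℕ) : ℝ) ≤ 4^(k'+2) := by exact_mod_cast hnatN k'
  have hb2 : ((4*k'+2 : ℕ) : ℝ) ≤ 4^(k'+2) := by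
    refine le_trans ?_ hb3; exact_mod_cast Nat.le_succ _
  have hb1 : ((4*k'+1 : ℕ) : ℝ) ≤ 4^(k'+2) := by
    refine le_trans ?_ hb3
    have : (4*k'+1 : ℕ) ≤ 4*k'+3 := by omega
    exact_mod_cast this
  have htriple : ((4*k'+3 : ℕ) : ℝ) * ((4*k'+2 : ℕ) : ℝ) * ((4*k'+1 : ℕ) : ℝ)
      ≤ (64:ℝ)^(k'+2) := by
    calc ((4*k'+3 : ℕ) : ℝ) * ((4*k'+2 : ℕ) : ℝ) * ((4*k'+1 : ℕ) : ℝ)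
        ≤ (4:ℝ)^(k'+2) * (4:ℝ)^(k'+2) * (4:ℝ)^(k'+2) := by
          apply mul_le_mul (mul_le_mul hb3 hb2 (by positivity) (by positivity)) hb1
            (by positivity) (by positivity)
      _ = (64:ℝ)^(k'+2) := by rw [← mul_pow, ← mul_pow]; norm_num
  have pDp : Dp ≤ Dp^(k'+2) := le_self_pow₀ hDp (by omega)
  have pM : M^(k'+1) ≤ M^(k'+2) := pow_le_pow_right₀ hM (by omega)
  have pLm : Lm^(4*k') ≤ (Lm^4)^(k'+2) := by
    rw [← pow_mul]
    exact pow_le_pow_right₀ hLm (by omega)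
  have core : Dp * M^(k'+1) * Lm^(4*k') *
      (((4*k'+3 : ℕ) : ℝ) * ((4*k'+2 : ℕ) : ℝ) * ((4*k'+1 : ℕ) : ℝ))
      ≤ (64 * Dp * M * Lm ^ 4) ^ (k'+2) := by
    have step1 : Dp * M^(k'+1) ≤ Dp^(k'+2) * M^(k'+2) :=
      mul_le_mul pDp pM (pow_nonneg hM0 _) (pow_nonneg hDp0 _)
    have step2 : Dp * M^(k'+1) * Lm^(4*k') ≤ Dp^(k'+2) * M^(k'+2) * (Lm^4)^(k'+2) :=
      mul_le_mul step1 pLm (pow_nonneg hLm0 _)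
        (mul_nonneg (pow_nonneg hDp0 _) (pow_nonneg hM0 _))
    calc Dp * M^(k'+1) * Lm^(4*k') *
        (((4*k'+3 : ℕ) : ℝ) * ((4*k'+2 : ℕ) : ℝ) * ((4*k'+1 : ℕ) : ℝ))
        ≤ (Dp^(k'+2) * M^(k'+2) * (Lm^4)^(k'+2)) * (64:ℝ)^(k'+2) := by
          apply mul_le_mul step2 htriple (by positivity)
            (mul_nonneg (mul_nonneg (pow_nonneg hDp0 _) (pow_nonneg hM0 _)) (pow_nonneg (by positivity) _))
      _ = (64 * Dp * M * Lm ^ 4) ^ (k'+2) := by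
          rw [mul_pow, mul_pow, mul_pow]; ring
  calc Dp * M ^ (k'+1) * Lm ^ (4*k') *
      (((4*k'+3 : ℕ) : ℝ) * ((4*k'+2 : ℕ) : ℝ) * ((4*k'+1 : ℕ) : ℝ) * ((4*k').factorial : ℝ))
      = Dp * M ^ (k'+1) * Lm ^ (4*k') *
        (((4*k'+3 : ℕ) : ℝ) * ((4*k'+2 : ℕ) : ℝ) * ((4*k'+1 : ℕ) : ℝ)) * ((4*k').factorial : ℝ) := by
        ring
    _ ≤ (64 * Dp * M * Lm ^ 4) ^ (k'+2) * ((4*k').factorial : ℝ) :=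
        mul_le_mul_of_nonneg_right core hf0.le

end Helpers

/-- there is `C > 0` such that for every `k ≥ 2`, `j ∈ {0,…,4}` and
`x ∈ [0,L]`, `|g_k⁽ʲ⁾(x)| ≤ C^k/(4k-5)!` and `|h_k⁽ʲ⁾(x)| ≤ C^k/(4k-5)!`. -/
theorem stmt4 (L m J : ℝ) (hL : 0 < L) (hm : 0 < m) (hJ : 0 < J)
    (ρ EI : ℝ → ℝ)
    (hρ : ContDiffOn ℝ 4 ρ (Set.Icc 0 L)) (hEI : ContDiffOn ℝ 4 EI (Set.Icc 0 L))
    (hρpos : ∃ c > 0, ∀ x ∈ Set.Icc (0:ℝ) L, c ≤ ρ x)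
    (hEIpos : ∃ c > 0, ∀ x ∈ Set.Icc (0:ℝ) L, c ≤ EI x) :
    ∃ C > 0, ∀ (k : ℕ), 2 ≤ k → ∀ (j : ℕ), j ≤ 4 → ∀ x ∈ Set.Icc (0:ℝ) L,
      |iteratedDerivWithin j (genG ρ EI m k) (Set.Icc 0 L) x| ≤
        C ^ k / ((4 * k - 5).factorial : ℝ) ∧
      |iteratedDerivWithin j (genH ρ EI J k) (Set.Icc 0 L) x| ≤
        C ^ k / ((4 * k - 5).factorial : ℝ) := by
  classical
  obtain ⟨cρ, hcρ, hρlb⟩ := hρpos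
  obtain ⟨cE, hcE, hEIlb⟩ := hEIpos
  have hsu : UniqueDiffOn ℝ (Set.Icc (0:ℝ) L) := uniqueDiffOn_Icc hL
  have hρc : ContinuousOn ρ (Set.Icc 0 L) := hρ.continuousOn
  have hEIc : ContinuousOn EI (Set.Icc 0 L) := hEI.continuousOn
  have hcomp : IsCompact (Set.Icc (0:ℝ) L) := isCompact_Icc
  obtain ⟨Bρ, hBρn⟩ := hcomp.exists_bound_of_continuousOn hρc
  have hBρ : ∀ x ∈ Set.Icc (0:ℝ) L, |ρ x| ≤ Bρ := by
    simpa [Real.norm_eq_abs] using hBρn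
  obtain ⟨BE, hBEn⟩ := hcomp.exists_bound_of_continuousOn hEIc
  have hBE : ∀ x ∈ Set.Icc (0:ℝ) L, |EI x| ≤ BE := by
    simpa [Real.norm_eq_abs] using hBEn
  have he1cd : ContDiffOn ℝ 3 (derivWithin EI (Set.Icc 0 L)) (Set.Icc 0 L) :=
    hEI.derivWithin hsu (by norm_num)
  obtain ⟨B1, hB1n⟩ := hcomp.exists_bound_of_continuousOn he1cd.continuousOn
  have hB1 : ∀ x ∈ Set.Icc (0:ℝ) L, |derivWithin EI (Set.Icc 0 L) x| ≤ B1 := by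
    simpa [Real.norm_eq_abs] using hB1n
  have he2cd : ContDiffOn ℝ 2
      (derivWithin (derivWithin EI (Set.Icc 0 L)) (Set.Icc 0 L)) (Set.Icc 0 L) :=
    he1cd.derivWithin hsu (by norm_num)
  obtain ⟨B2, hB2n⟩ := hcomp.exists_bound_of_continuousOn he2cd.continuousOn
  have hB2 : ∀ x ∈ Set.Icc (0:ℝ) L,
      |derivWithin (derivWithin EI (Set.Icc 0 L)) (Set.Icc 0 L) x| ≤ B2 := by
    simpa [Real.norm_eq_abs] using hB2n
  obtain ⟨hGc1, hG1b⟩ := base_g hL m hρc hEIc hcE hEIlb hBρ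
  obtain ⟨hHc1, hH1b⟩ := base_h hL J hρc hEIc hcE hEIlb hBρ
  have hBρ0 : 0 ≤ Bρ := le_trans (abs_nonneg _) (hBρ 0 ⟨le_rfl, hL.le⟩)
  have hcE' : (0:ℝ) < cE⁻¹ := by positivity
  obtain ⟨Mg1, hG1b⟩ : ∃ c : ℝ, ∀ x ∈ Set.Icc (0:ℝ) L, |genG ρ EI m 1 x| ≤ c := ⟨_, hG1b⟩
  obtain ⟨Mh1, hH1b⟩ : ∃ c : ℝ, ∀ x ∈ Set.Icc (0:ℝ) L, |genH ρ EI J 1 x| ≤ c := ⟨_, hH1b⟩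
  set M := |Mg1| + |Mh1| + Bρ * cE⁻¹ + 1 with hMd
  have hBcE0 : 0 ≤ Bρ * cE⁻¹ := mul_nonneg hBρ0 hcE'.le
  have hM1 : 1 ≤ M := by
    rw [hMd]; linarith [abs_nonneg Mg1, abs_nonneg Mh1]
  have hM0 : (0:ℝ) ≤ M := by linarith
  have hMg1M : Mg1 ≤ M := by
    rw [hMd]; linarith [le_abs_self Mg1, abs_nonneg Mh1]
  have hMh1M : Mh1 ≤ M := by
    rw [hMd]; linarith [le_abs_self Mh1, abs_nonneg Mg1]
  have hBcEM : Bρ * cE⁻¹ ≤ M := by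
    rw [hMd]; linarith [abs_nonneg Mg1, abs_nonneg Mh1]
  set Lm := max L 1 with hLmd
  have hLm1 : (1:ℝ) ≤ Lm := le_max_right _ _
  have hLLm : L ≤ Lm := le_max_left _ _
  have hLm0 : (0:ℝ) ≤ Lm := by linarith
  -- the inductive bounds
  have claim : ∀ k : ℕ,
      (ContinuousOn (genG ρ EI m (k+1)) (Set.Icc 0 L) ∧
        ∀ x ∈ Set.Icc (0:ℝ) L,
          |genG ρ EI m (k+1) x| ≤ M^(k+1) * x^(4*k) / ((4*k).factorial : ℝ)) ∧
      (ContinuousOn (genH ρ EI J (k+1)) (Set.Icc 0 L) ∧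
        ∀ x ∈ Set.Icc (0:ℝ) L,
          |genH ρ EI J (k+1) x| ≤ M^(k+1) * x^(4*k) / ((4*k).factorial : ℝ)) := by
    intro k
    induction k with
    | zero =>
      refine ⟨⟨hGc1, fun x hx => ?_⟩, ⟨hHc1, fun x hx => ?_⟩⟩
      · have h := (hG1b x hx).trans hMg1M
        simpa using h
      · have h := (hH1b x hx).trans hMh1M
        simpa using h
    | succ k ih =>
      obtain ⟨⟨ihGc, ihGb⟩, ihHc, ihHb⟩ := ih
      have hMp : (0:ℝ) ≤ M^(k+1) := pow_nonneg hM0 _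
      have hfp : (0:ℝ) < ((4*k).factorial : ℝ) := Nat.cast_pos.2 (Nat.factorial_pos _)
      have hAsupnn : (0:ℝ) ≤ M^(k+1) * Lm^(4*k) / ((4*k).factorial : ℝ) :=
        div_nonneg (mul_nonneg hMp (pow_nonneg hLm0 _)) hfp.le
      have hsupG : ∀ t ∈ Set.Icc (0:ℝ) L,
          |genG ρ EI m (k+1) t| ≤ M^(k+1) * Lm^(4*k) / ((4*k).factorial : ℝ) := by
        intro t ht
        refine (ihGb t ht).trans ?_
        have h1 : t^(4*k) ≤ Lm^(4*k) := pow_le_pow_left₀ ht.1 (ht.2.trans hLLm) _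
        exact (div_le_div_iff_of_pos_right hfp).2 (mul_le_mul_of_nonneg_left h1 hMp)
      have hsupH : ∀ t ∈ Set.Icc (0:ℝ) L,
          |genH ρ EI J (k+1) t| ≤ M^(k+1) * Lm^(4*k) / ((4*k).factorial : ℝ) := by
        intro t ht
        refine (ihHb t ht).trans ?_
        have h1 : t^(4*k) ≤ Lm^(4*k) := pow_le_pow_left₀ ht.1 (ht.2.trans hLLm) _
        exact (div_le_div_iff_of_pos_right hfp).2 (mul_le_mul_of_nonneg_left h1 hMp)
      have keyG := key hL hEI hcE hEIlb hρc ihGc hBρ hBE hB1 hB2 hAsupnn hsupG hMp ihGb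
      have keyH := key hL hEI hcE hEIlb hρc ihHc hBρ hBE hB1 hB2 hAsupnn hsupH hMp ihHb
      have hGrec : genG ρ EI m (k+1+1) = Ff ρ EI (genG ρ EI m (k+1)) := rfl
      have hHrec : genH ρ EI J (k+1+1) = Ff ρ EI (genH ρ EI J (k+1)) := rfl
      have hfp4 : (0:ℝ) < ((4*k+4).factorial : ℝ) := Nat.cast_pos.2 (Nat.factorial_pos _)
      have hc12 : Bρ * cE⁻¹ * M^(k+1) ≤ M^(k+1+1) := by
        rw [pow_succ]
        exact mul_le_mul_of_nonneg_right hBcEM hMp |>.trans_eq (mul_comm M (M^(k+1)))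
      refine ⟨⟨?_, fun x hx => ?_⟩, ⟨?_, fun x hx => ?_⟩⟩
      · rw [hGrec]; exact keyG.1
      · rw [hGrec]
        refine (keyG.2.1 x hx).trans ?_
        rw [show 4*(k+1) = 4*k+4 from by omega]
        exact (div_le_div_iff_of_pos_right hfp4).2 (mul_le_mul_of_nonneg_right hc12 (pow_nonneg hx.1 _))
      · rw [hHrec]; exact keyH.1
      · rw [hHrec]
        refine (keyH.2.1 x hx).trans ?_
        rw [show 4*(k+1) = 4*k+4 from by omega]
        exact (div_le_div_iff_of_pos_right hfp4).2 (mul_le_mul_of_nonneg_right hc12 (pow_nonneg hx.1 _))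
  -- the final constant
  set Dv := Dconst L cE Bρ BE B1 B2 with hDvd
  set Dp := |Dv| + 1 with hDpd
  have hDp1 : (1:ℝ) ≤ Dp := by rw [hDpd]; linarith [abs_nonneg Dv]
  have hDvDp : Dv ≤ Dp := by rw [hDpd]; linarith [le_abs_self Dv]
  have hDppos : (0:ℝ) < Dp := lt_of_lt_of_le one_pos hDp1
  have hMpos : (0:ℝ) < M := lt_of_lt_of_le one_pos hM1
  have hLmpos : (0:ℝ) < Lm := lt_of_lt_of_le one_pos hLm1
  refine ⟨64 * Dp * M * Lm ^ 4, by positivity, ?_⟩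
  intro k hk j hj x hx
  obtain ⟨k', rfl⟩ : ∃ k', k = k' + 2 := ⟨k - 2, by omega⟩
  obtain ⟨⟨ihGc, ihGb⟩, ihHc, ihHb⟩ := claim k'
  have hMp : (0:ℝ) ≤ M^(k'+1) := pow_nonneg hM0 _
  have hfp : (0:ℝ) < ((4*k').factorial : ℝ) := Nat.cast_pos.2 (Nat.factorial_pos _)
  have hAsupnn : (0:ℝ) ≤ M^(k'+1) * Lm^(4*k') / ((4*k').factorial : ℝ) :=
    div_nonneg (mul_nonneg hMp (pow_nonneg hLm0 _)) hfp.le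
  have hsupG : ∀ t ∈ Set.Icc (0:ℝ) L,
      |genG ρ EI m (k'+1) t| ≤ M^(k'+1) * Lm^(4*k') / ((4*k').factorial : ℝ) := by
    intro t ht
    refine (ihGb t ht).trans ?_
    have h1 : t^(4*k') ≤ Lm^(4*k') := pow_le_pow_left₀ ht.1 (ht.2.trans hLLm) _
    exact (div_le_div_iff_of_pos_right hfp).2 (mul_le_mul_of_nonneg_left h1 hMp)
  have hsupH : ∀ t ∈ Set.Icc (0:ℝ) L,
      |genH ρ EI J (k'+1) t| ≤ M^(k'+1) * Lm^(4*k') / ((4*k').factorial : ℝ) := by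
    intro t ht
    refine (ihHb t ht).trans ?_
    have h1 : t^(4*k') ≤ Lm^(4*k') := pow_le_pow_left₀ ht.1 (ht.2.trans hLLm) _
    exact (div_le_div_iff_of_pos_right hfp).2 (mul_le_mul_of_nonneg_left h1 hMp)
  have keyG := key hL hEI hcE hEIlb hρc ihGc hBρ hBE hB1 hB2 hAsupnn hsupG hMp ihGb
  have keyH := key hL hEI hcE hEIlb hρc ihHc hBρ hBE hB1 hB2 hAsupnn hsupH hMp ihHb
  have hGrec : genG ρ EI m (k'+2) = Ff ρ EI (genG ρ EI m (k'+1)) := rfl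
  have hHrec : genH ρ EI J (k'+2) = Ff ρ EI (genH ρ EI J (k'+1)) := rfl
  constructor
  · rw [hGrec]
    calc |iteratedDerivWithin j (Ff ρ EI (genG ρ EI m (k'+1))) (Set.Icc 0 L) x|
        ≤ Dv * (M^(k'+1) * Lm^(4*k') / ((4*k').factorial : ℝ)) := keyG.2.2 j hj x hx
      _ ≤ Dp * (M^(k'+1) * Lm^(4*k') / ((4*k').factorial : ℝ)) :=
          mul_le_mul_of_nonneg_right hDvDp hAsupnn
      _ ≤ (64 * Dp * M * Lm ^ 4)^(k'+2) / (((4*(k'+2)-5).factorial : ℕ) : ℝ) :=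
          arith hDp1 hM1 hLm1 k'
  · rw [hHrec]
    calc |iteratedDerivWithin j (Ff ρ EI (genH ρ EI J (k'+1))) (Set.Icc 0 L) x|
        ≤ Dv * (M^(k'+1) * Lm^(4*k') / ((4*k').factorial : ℝ)) := keyH.2.2 j hj x hx
      _ ≤ Dp * (M^(k'+1) * Lm^(4*k') / ((4*k').factorial : ℝ)) :=
          mul_le_mul_of_nonneg_right hDvDp hAsupnn
      _ ≤ (64 * Dp * M * Lm ^ 4)^(k'+2) / (((4*(k'+2)-5).factorial : ℕ) : ℝ) :=
          arith hDp1 hM1 hLm1 k'
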